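/- arXiv:2303.12404 — 4 statements merged into one kernel-verified Lean document; each statement's English description precedes it below -/
import Mathlib

section
/- (Iwasawa criterion) Let a group G act on a set X, and suppose given for every x ∈ X a subgroup T(x) of G such that: (i) each T(x) is commutative; (ii) T(g·x) = g T(x) g⁻¹ for every g ∈ G and x ∈ X; (iii) the subgroups T(x), for x ∈ X, generate G. If the action of G on X is quasiprimitive, then every normal subgroup N of G that acts nontrivially on X contains the commutator subgroup D(G) of G. -/
/-!
Fix `x₀ : X`. Since `N` is transitive, every `T x` is `T (n • x₀) = n T(x₀) n⁻¹ ≤ T x₀ ⊔ N`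
for some `n ∈ N`, so `T x₀ ⊔ N = G` and `G ⧸ N` is a quotient of the commutative group `T x₀`.
-/

namespace MulAction

variable {G X : Type*} [Group G] [MulAction G X]

theorem fixedPoints_ne_univ_iff {N : Subgroup G} :
    fixedPoints N X ≠ .univ ↔ ∃ n ∈ N, ∃ x : X, n • x ≠ x := by
  simp only [ne_eq, Set.eq_univ_iff_forall, mem_fixedPoints, Subtype.forall, Subgroup.mk_smul,
    not_forall]
  exact ⟨fun ⟨x, n, hn, hnx⟩ ↦ ⟨n, hn, x, hnx⟩, fun ⟨n, hn, x, hnx⟩ ↦ ⟨x, n, hn, hnx⟩⟩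

/-- Transitivity of `G`, which `IsQuasiPreprimitive` includes, comes from applying `hquasi`
to `⊤`. -/
theorem isQuasiPreprimitive_of_forall_normal
    (hquasi : ∀ M : Subgroup G, M.Normal → (∃ m ∈ M, ∃ x : X, m • x ≠ x) →
      IsPretransitive M X)
    (hG : ∃ g : G, ∃ x : X, g • x ≠ x) : IsQuasiPreprimitive G X where
  toIsPretransitive := by
    obtain ⟨g, x, hgx⟩ := hG
    have := hquasi ⊤ inferInstance ⟨g, trivial, x, hgx⟩
    exact .of_smul_eq (fun m : (⊤ : Subgroup G) ↦ (m : G)) rfl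
  isPretransitive_of_normal {N} hN hfix := hquasi N hN (fixedPoints_ne_univ_iff.mp hfix)

end MulAction

/-- The Iwasawa criterion: if a group `G` acts quasiprimitively on `X` and admits an
equivariant family of commutative subgroups `T x` generating `G`, then every normal
subgroup of `G` acting nontrivially on `X` contains the commutator subgroup of `G`. -/
theorem iwasawa_criterion {G X : Type*} [Group G] [MulAction G X]
    (T : X → Subgroup G)
    (hcomm : ∀ x : X, IsMulCommutative (T x))
    (hconj : ∀ (g : G) (x : X), T (g • x) = (T x).map (MulAut.conj g).toMonoidHom)
    (hgen : (⨆ x : X, T x) = ⊤)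
    (hquasi : ∀ M : Subgroup G, M.Normal → (∃ m ∈ M, ∃ x : X, m • x ≠ x) →
      MulAction.IsPretransitive M X)
    (N : Subgroup G) (hN : N.Normal) (hNX : ∃ n ∈ N, ∃ x : X, n • x ≠ x) :
    commutator G ≤ N := by
  have hfix := MulAction.fixedPoints_ne_univ_iff.mpr hNX
  obtain ⟨n, -, x, hnx⟩ := hNX
  have := MulAction.isQuasiPreprimitive_of_forall_normal hquasi ⟨n, x, hnx⟩
  exact (⟨T, hcomm, hconj, hgen⟩ : MulAction.IwasawaStructure G X).commutator_le N hfix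
end

section
/- Let n and k be integers with 0 < k, k < n − k, and 4 ≤ n (so in particular n − k < n). The natural action of the alternating group A_n on the set X^[k] of k-element subsets of an n-element set X is primitive. -/
open Pointwise

/-- The action of a permutation group on the `k`-element subsets,
by taking images. -/
instance {α : Type*} [DecidableEq α] (k : ℕ) :
    MulAction (Equiv.Perm α) { s : Finset α // s.card = k } where
  smul g s := ⟨g • s.val, by rw [Finset.card_smul_finset]; exact s.2⟩
  one_smul s := Subtype.ext (one_smul (Equiv.Perm α) s.val)
  mul_smul g h s := Subtype.ext (mul_smul g h s.val)

/-- An action of a group `G` on a set `X` is preprimitive if it is (pre)transitive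
and every block of the action is a subsingleton or all of `X`. -/
def IsPreprimitive (G X : Type*) [Group G] [MulAction G X] : Prop :=
  MulAction.IsPretransitive G X ∧
    ∀ B : Set X, MulAction.IsBlock G B → B.Subsingleton ∨ B = Set.univ

section AuxLemmas

open Finset

private lemma exists_perm_pieces {α : Type*} [DecidableEq α] [Fintype α]
    (A1 A2 A3 B1 B2 B3 : Finset α)
    (hA12 : Disjoint A1 A2) (hA13 : Disjoint A1 A3) (hA23 : Disjoint A2 A3)
    (hB12 : Disjoint B1 B2) (hB13 : Disjoint B1 B3) (hB23 : Disjoint B2 B3)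
    (c1 : A1.card = B1.card) (c2 : A2.card = B2.card) (c3 : A3.card = B3.card) :
    ∃ g : Equiv.Perm α, (∀ x ∈ A1, g x ∈ B1) ∧ (∀ x ∈ A2, g x ∈ B2) ∧ (∀ x ∈ A3, g x ∈ B3) := by
  classical
  set A4 := (A1 ∪ A2 ∪ A3)ᶜ with hA4
  set B4 := (B1 ∪ B2 ∪ B3)ᶜ with hB4
  have cu : (A1 ∪ A2 ∪ A3).card = (B1 ∪ B2 ∪ B3).card := by
    rw [card_union_of_disjoint (by simp [disjoint_union_left, hA13, hA23]),
        card_union_of_disjoint hA12,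
        card_union_of_disjoint (by simp [disjoint_union_left, hB13, hB23]),
        card_union_of_disjoint hB12, c1, c2, c3]
  have c4 : A4.card = B4.card := by
    rw [hA4, hB4, card_compl, card_compl, cu]
  have e1 : ↥A1 ≃ ↥B1 := Fintype.equivOfCardEq (by simpa using c1)
  have e2 : ↥A2 ≃ ↥B2 := Fintype.equivOfCardEq (by simpa using c2)
  have e3 : ↥A3 ≃ ↥B3 := Fintype.equivOfCardEq (by simpa using c3)
  have e4 : ↥A4 ≃ ↥B4 := Fintype.equivOfCardEq (by simpa using c4)
  set f : α → α := fun x =>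
    if h : x ∈ A1 then (e1 ⟨x, h⟩ : α)
    else if h : x ∈ A2 then (e2 ⟨x, h⟩ : α)
    else if h : x ∈ A3 then (e3 ⟨x, h⟩ : α)
    else (e4 ⟨x, by simp [hA4, h, *]⟩ : α) with hf
  have hmem : ∀ x : α, (x ∈ A1 ∧ f x ∈ B1) ∨ (x ∈ A2 ∧ f x ∈ B2) ∨
      (x ∈ A3 ∧ f x ∈ B3) ∨ (x ∉ A1 ∧ x ∉ A2 ∧ x ∉ A3 ∧ f x ∈ B4) := by
    intro x
    by_cases h1 : x ∈ A1
    · exact Or.inl ⟨h1, by simp only [hf, dif_pos h1]; exact coe_mem _⟩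
    by_cases h2 : x ∈ A2
    · exact Or.inr (Or.inl ⟨h2, by simp only [hf, dif_neg h1, dif_pos h2]; exact coe_mem _⟩)
    by_cases h3 : x ∈ A3
    · exact Or.inr (Or.inr (Or.inl ⟨h3, by
        simp only [hf, dif_neg h1, dif_neg h2, dif_pos h3]; exact coe_mem _⟩))
    · exact Or.inr (Or.inr (Or.inr ⟨h1, h2, h3, by
        simp only [hf, dif_neg h1, dif_neg h2, dif_neg h3]; exact coe_mem _⟩))
  have hB14 : Disjoint B1 B4 := by
    rw [hB4]
    exact disjoint_compl_right.mono_left (by intro x hx; simp [hx])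
  have hB24 : Disjoint B2 B4 := by
    rw [hB4]
    exact disjoint_compl_right.mono_left (by intro x hx; simp [hx])
  have hB34 : Disjoint B3 B4 := by
    rw [hB4]
    exact disjoint_compl_right.mono_left (by intro x hx; simp [hx])
  have hinj : Function.Injective f := by
    intro x y hxy
    have hx := hmem x
    have hy := hmem y
    have same : (x ∈ A1 ∧ y ∈ A1) ∨ (x ∈ A2 ∧ y ∈ A2) ∨ (x ∈ A3 ∧ y ∈ A3) ∨
        ((x ∉ A1 ∧ x ∉ A2 ∧ x ∉ A3) ∧ (y ∉ A1 ∧ y ∉ A2 ∧ y ∉ A3)) := by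
      rw [hxy] at hx
      rcases hx with ⟨hx1, hfx⟩ | ⟨hx2, hfx⟩ | ⟨hx3, hfx⟩ | ⟨hx1, hx2, hx3, hfx⟩ <;>
        rcases hy with ⟨hy1, hfy⟩ | ⟨hy2, hfy⟩ | ⟨hy3, hfy⟩ | ⟨hy1, hy2, hy3, hfy⟩ <;>
        first
          | (exact Or.inl ⟨hx1, hy1⟩)
          | (exact Or.inr (Or.inl ⟨hx2, hy2⟩))
          | (exact Or.inr (Or.inr (Or.inl ⟨hx3, hy3⟩)))
          | (exact Or.inr (Or.inr (Or.inr ⟨⟨hx1, hx2, hx3⟩, hy1, hy2, hy3⟩)))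
          | (exact absurd hfy (disjoint_left.mp ‹_› hfx))
          | (exact absurd hfx (disjoint_left.mp ‹_› hfy))
          | (exact absurd hfy (disjoint_right.mp ‹_› hfx))
          | (exact absurd hfx (disjoint_right.mp ‹_› hfy))
    rcases same with ⟨hx1, hy1⟩ | ⟨hx2, hy2⟩ | ⟨hx3, hy3⟩ | ⟨⟨hx1, hx2, hx3⟩, hy1, hy2, hy3⟩
    · simp only [hf, dif_pos hx1, dif_pos hy1] at hxy
      exact congrArg Subtype.val (e1.injective (Subtype.coe_injective hxy))
    · simp only [hf, dif_neg (fun h => disjoint_left.mp hA12 h hx2),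
        dif_neg (fun h => disjoint_left.mp hA12 h hy2), dif_pos hx2, dif_pos hy2] at hxy
      exact congrArg Subtype.val (e2.injective (Subtype.coe_injective hxy))
    · simp only [hf, dif_neg (fun h => disjoint_left.mp hA13 h hx3),
        dif_neg (fun h => disjoint_left.mp hA13 h hy3),
        dif_neg (fun h => disjoint_left.mp hA23 h hx3),
        dif_neg (fun h => disjoint_left.mp hA23 h hy3), dif_pos hx3, dif_pos hy3] at hxy
      exact congrArg Subtype.val (e3.injective (Subtype.coe_injective hxy))
    · simp only [hf, dif_neg hx1, dif_neg hx2, dif_neg hx3, dif_neg hy1, dif_neg hy2,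
        dif_neg hy3] at hxy
      exact congrArg Subtype.val (e4.injective (Subtype.coe_injective hxy))
  refine ⟨Equiv.ofBijective f (Finite.injective_iff_bijective.mp hinj), ?_, ?_, ?_⟩ <;>
    intro x hx <;>
    · show f x ∈ _
      rcases hmem x with ⟨h, hm⟩ | ⟨h, hm⟩ | ⟨h, hm⟩ | ⟨h1, h2, h3, hm⟩ <;>
        first
          | exact hm
          | exact absurd hx (fun hx => disjoint_left.mp hA12 hx h)
          | exact absurd hx (fun hx => disjoint_left.mp hA13 hx h)
          | exact absurd hx (fun hx => disjoint_left.mp hA23 hx h)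
          | exact absurd hx (fun hx => disjoint_right.mp hA12 hx h)
          | exact absurd hx (fun hx => disjoint_right.mp hA13 hx h)
          | exact absurd hx (fun hx => disjoint_right.mp hA23 hx h)
          | exact absurd hx h1
          | exact absurd hx h2
          | exact absurd hx h3

private lemma swap_mem {α : Type*} [DecidableEq α] {a b x : α} {u : Finset α}
    (hab : a ∈ u ↔ b ∈ u) (hx : x ∈ u) : Equiv.swap a b x ∈ u := by
  rcases eq_or_ne x a with rfl | hxa
  · rwa [Equiv.swap_apply_left, ← hab]
  rcases eq_or_ne x b with rfl | hxb
  · rwa [Equiv.swap_apply_right, hab]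
  · rwa [Equiv.swap_apply_of_ne_of_ne hxa hxb]

private lemma exists_alternating_pair {α : Type*} [DecidableEq α] [Fintype α] {k : ℕ}
    (hk : 0 < k) (hn : 2 * k < Fintype.card α) (h4 : 4 ≤ Fintype.card α)
    {s t s' t' : Finset α} (hs : s.card = k) (ht : t.card = k)
    (hs' : s'.card = k) (ht' : t'.card = k)
    (hm : (s ∩ t).card = (s' ∩ t').card) :
    ∃ g ∈ alternatingGroup α, g • s = s' ∧ g • t = t' := by
  classical
  have key : ∀ g : Equiv.Perm α, (∀ x ∈ s, g x ∈ s') → (∀ x ∈ t, g x ∈ t') →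
      g • s = s' ∧ g • t = t' := by
    intro g hgs hgt
    constructor
    · refine Finset.eq_of_subset_of_card_le ?_ (by rw [Finset.card_smul_finset, hs, hs'])
      rw [Finset.smul_finset_def, Finset.image_subset_iff]
      exact fun x hx => hgs x hx
    · refine Finset.eq_of_subset_of_card_le ?_ (by rw [Finset.card_smul_finset, ht, ht'])
      rw [Finset.smul_finset_def, Finset.image_subset_iff]
      exact fun x hx => hgt x hx
  -- get a permutation mapping the pieces correctly
  have hd1 : Disjoint (s ∩ t) (s \ t) := by
    rw [Finset.disjoint_left]; intro x hx hx'
    exact (Finset.mem_sdiff.mp hx').2 (Finset.mem_inter.mp hx).2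
  have hd2 : Disjoint (s ∩ t) (t \ s) := by
    rw [Finset.disjoint_left]; intro x hx hx'
    exact (Finset.mem_sdiff.mp hx').2 (Finset.mem_inter.mp hx).1
  have hd3 : Disjoint (s \ t) (t \ s) := by
    rw [Finset.disjoint_left]; intro x hx hx'
    exact (Finset.mem_sdiff.mp hx).2 (Finset.mem_sdiff.mp hx').1
  have hd1' : Disjoint (s' ∩ t') (s' \ t') := by
    rw [Finset.disjoint_left]; intro x hx hx'
    exact (Finset.mem_sdiff.mp hx').2 (Finset.mem_inter.mp hx).2
  have hd2' : Disjoint (s' ∩ t') (t' \ s') := by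
    rw [Finset.disjoint_left]; intro x hx hx'
    exact (Finset.mem_sdiff.mp hx').2 (Finset.mem_inter.mp hx).1
  have hd3' : Disjoint (s' \ t') (t' \ s') := by
    rw [Finset.disjoint_left]; intro x hx hx'
    exact (Finset.mem_sdiff.mp hx).2 (Finset.mem_sdiff.mp hx').1
  have hcs := Finset.card_inter_add_card_sdiff s t
  have hcs' := Finset.card_inter_add_card_sdiff s' t'
  have hct := Finset.card_inter_add_card_sdiff t s
  have hct' := Finset.card_inter_add_card_sdiff t' s'
  rw [Finset.inter_comm] at hct hct'
  obtain ⟨g0, hg1, hg2, hg3⟩ := exists_perm_pieces (s ∩ t) (s \ t) (t \ s)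
    (s' ∩ t') (s' \ t') (t' \ s') hd1 hd2 hd3 hd1' hd2' hd3' hm (by omega) (by omega)
  have hg0s : ∀ x ∈ s, g0 x ∈ s' := by
    intro x hx
    by_cases hxt : x ∈ t
    · exact (Finset.mem_inter.mp (hg1 x (Finset.mem_inter.mpr ⟨hx, hxt⟩))).1
    · exact (Finset.mem_sdiff.mp (hg2 x (Finset.mem_sdiff.mpr ⟨hx, hxt⟩))).1
  have hg0t : ∀ x ∈ t, g0 x ∈ t' := by
    intro x hx
    by_cases hxs : x ∈ s
    · exact (Finset.mem_inter.mp (hg1 x (Finset.mem_inter.mpr ⟨hxs, hx⟩))).2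
    · exact (Finset.mem_sdiff.mp (hg3 x (Finset.mem_sdiff.mpr ⟨hx, hxs⟩))).1
  rcases Int.units_eq_one_or (Equiv.Perm.sign g0) with hsgn | hsgn
  · exact ⟨g0, Equiv.Perm.mem_alternatingGroup.mpr hsgn, key g0 hg0s hg0t⟩
  -- parity fix: find a ≠ b with (a ∈ s' ↔ b ∈ s') and (a ∈ t' ↔ b ∈ t')
  have hab : ∃ a b : α, a ≠ b ∧ (a ∈ s' ↔ b ∈ s') ∧ (a ∈ t' ↔ b ∈ t') := by
    by_cases h2 : 1 < (s' \ t').card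
    · obtain ⟨a, ha, b, hb, hne⟩ := Finset.one_lt_card.mp h2
      rw [Finset.mem_sdiff] at ha hb
      exact ⟨a, b, hne, by simp [ha.1, hb.1], by simp [ha.2, hb.2]⟩
    · have hcc : ((s' ∪ t')ᶜ).card = Fintype.card α - (s' ∪ t').card := Finset.card_compl _
      have hcu : (s' ∪ t').card + (s' ∩ t').card = s'.card + t'.card :=
        Finset.card_union_add_card_inter s' t'
      have hmle : (s' ∩ t').card ≤ k := by
        rw [← hs']; exact Finset.card_le_card Finset.inter_subset_left
      have h2' : 1 < ((s' ∪ t')ᶜ).card := by omega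
      obtain ⟨a, ha, b, hb, hne⟩ := Finset.one_lt_card.mp h2'
      rw [Finset.mem_compl, Finset.mem_union] at ha hb
      push_neg at ha hb
      exact ⟨a, b, hne, by simp [ha.1, hb.1], by simp [ha.2, hb.2]⟩
  obtain ⟨a, b, hne, habs, habt⟩ := hab
  refine ⟨Equiv.swap a b * g0, ?_, key _ (fun x hx => swap_mem habs (hg0s x hx))
    (fun x hx => swap_mem habt (hg0t x hx))⟩
  rw [Equiv.Perm.mem_alternatingGroup, Equiv.Perm.sign_mul, Equiv.Perm.sign_swap hne, hsgn]
  decide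

private lemma exists_middle {α : Type*} [DecidableEq α] [Fintype α] {k m : ℕ} (hm : m < k)
    (hn : 2 * k < Fintype.card α) {x y : Finset α} (hx : x.card = k) (hy : y.card = k)
    (hxy : (x ∩ y).card = k - 1) :
    ∃ w : Finset α, w.card = k ∧ (x ∩ w).card = m ∧ (y ∩ w).card = m := by
  classical
  obtain ⟨P, hPsub, hPcard⟩ := Finset.exists_subset_card_eq
    (show m ≤ (x ∩ y).card by omega)
  have hcu : (x ∪ y).card + (x ∩ y).card = x.card + y.card :=
    Finset.card_union_add_card_inter x y
  have hQle : k - m ≤ ((x ∪ y)ᶜ).card := by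
    rw [Finset.card_compl]; omega
  obtain ⟨Q, hQsub, hQcard⟩ := Finset.exists_subset_card_eq hQle
  have hQx : ∀ z ∈ Q, z ∉ x := fun z hz hzx => by
    have := hQsub hz
    rw [Finset.mem_compl, Finset.mem_union] at this
    exact this (Or.inl hzx)
  have hQy : ∀ z ∈ Q, z ∉ y := fun z hz hzy => by
    have := hQsub hz
    rw [Finset.mem_compl, Finset.mem_union] at this
    exact this (Or.inr hzy)
  have hPQ : Disjoint P Q := Finset.disjoint_left.mpr fun z hz hz' =>
    hQx z hz' ((Finset.mem_inter.mp (hPsub hz)).1)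
  have hxw : x ∩ (P ∪ Q) = P := by
    ext z
    simp only [Finset.mem_inter, Finset.mem_union]
    constructor
    · rintro ⟨hzx, hzP | hzQ⟩
      · exact hzP
      · exact absurd hzx (hQx z hzQ)
    · intro hzP
      exact ⟨(Finset.mem_inter.mp (hPsub hzP)).1, Or.inl hzP⟩
  have hyw : y ∩ (P ∪ Q) = P := by
    ext z
    simp only [Finset.mem_inter, Finset.mem_union]
    constructor
    · rintro ⟨hzy, hzP | hzQ⟩
      · exact hzP
      · exact absurd hzy (hQy z hzQ)
    · intro hzP
      exact ⟨(Finset.mem_inter.mp (hPsub hzP)).2, Or.inl hzP⟩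
  refine ⟨P ∪ Q, ?_, ?_, ?_⟩
  · rw [Finset.card_union_of_disjoint hPQ, hPcard, hQcard]; omega
  · rw [hxw, hPcard]
  · rw [hyw, hPcard]

end AuxLemmas

/-- If `0 < k`, `k < n - k` and `4 ≤ n`, the action of the alternating group of an
`n`-element set `X` on the set of `k`-element subsets of `X` is primitive. -/
theorem isPreprimitive_alternating_on_subsets {α : Type*} [DecidableEq α] [Fintype α] (k : ℕ)
    (hk : 0 < k) (hkk : k < Fintype.card α - k) (h4 : 4 ≤ Fintype.card α) :
    IsPreprimitive (alternatingGroup α) { s : Finset α // s.card = k } := by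
  classical
  have hn : 2 * k < Fintype.card α := by omega
  have hsmul : ∀ (g : Equiv.Perm α) (hg : g ∈ alternatingGroup α)
      (x : { s : Finset α // s.card = k }),
      ((⟨g, hg⟩ : alternatingGroup α) • x).val = g • x.val := fun _ _ _ => rfl
  constructor
  · constructor
    intro x y
    obtain ⟨g, hg, hgs, -⟩ := exists_alternating_pair hk hn h4 x.2 x.2 y.2 y.2
      (by rw [Finset.inter_self, Finset.inter_self, x.2, y.2])
    exact ⟨⟨g, hg⟩, Subtype.ext hgs⟩
  · intro B hB
    by_cases hBs : B.Subsingleton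
    · exact Or.inl hBs
    right
    rw [Set.not_subsingleton_iff] at hBs
    obtain ⟨s, hsB, t, htB, hst⟩ := hBs
    set m := (s.val ∩ t.val).card with hmdef
    have hmle : m ≤ k := by
      rw [hmdef]
      exact le_of_le_of_eq (Finset.card_le_card Finset.inter_subset_left) s.2
    have hmlt : m < k := by
      rcases lt_or_eq_of_le hmle with h | h
      · exact h
      · exfalso
        apply hst
        have h1 : s.val ∩ t.val = s.val :=
          Finset.eq_of_subset_of_card_le Finset.inter_subset_left (by rw [s.2, ← hmdef, h])
        have hsub : s.val ⊆ t.val := by rw [← h1]; exact Finset.inter_subset_right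
        exact Subtype.ext (Finset.eq_of_subset_of_card_le hsub (by rw [s.2, t.2]))
    -- closure under "intersection of size m"
    have hC : ∀ x ∈ B, ∀ y : { s : Finset α // s.card = k },
        (x.val ∩ y.val).card = m → y ∈ B := by
      intro x hx y hxy
      obtain ⟨g, hg, hgs, hgt⟩ := exists_alternating_pair hk hn h4 s.2 t.2 x.2 y.2
        (by rw [← hmdef, hxy])
      have hgsB : (⟨g, hg⟩ : alternatingGroup α) • s = x := Subtype.ext hgs
      have hBeq : (⟨g, hg⟩ : alternatingGroup α) • B = B :=
        hB.smul_eq_of_mem hsB (by rw [hgsB]; exact hx)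
      have hgtB : (⟨g, hg⟩ : alternatingGroup α) • t = y := Subtype.ext hgt
      rw [← hgtB, ← hBeq]
      exact Set.smul_mem_smul_set htB
    -- closure under "intersection of size k - 1"
    have hE : ∀ x ∈ B, ∀ y : { s : Finset α // s.card = k },
        (x.val ∩ y.val).card = k - 1 → y ∈ B := by
      intro x hx y hxy
      obtain ⟨w, hw, hxw, hyw⟩ := exists_middle hmlt hn x.2 y.2 hxy
      exact hC ⟨w, hw⟩ (hC x hx ⟨w, hw⟩ hxw) y (by rw [Finset.inter_comm]; exact hyw)
    have hall : ∀ c : ℕ, ∀ y : { s : Finset α // s.card = k },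
        (s.val ∩ y.val).card + c = k → y ∈ B := by
      intro c
      induction c with
      | zero =>
        intro y hy
        have h1 : s.val ∩ y.val = s.val :=
          Finset.eq_of_subset_of_card_le Finset.inter_subset_left (by rw [s.2]; omega)
        have hsub : s.val ⊆ y.val := by rw [← h1]; exact Finset.inter_subset_right
        have h2 : s = y :=
          Subtype.ext (Finset.eq_of_subset_of_card_le hsub (by rw [s.2, y.2]))
        rwa [← h2]
      | succ c ih =>
        intro y hy
        have hcs := Finset.card_inter_add_card_sdiff s.val y.val
        have hct := Finset.card_inter_add_card_sdiff y.val s.val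
        rw [Finset.inter_comm] at hct
        obtain ⟨a, ha⟩ : (s.val \ y.val).Nonempty := by
          rw [← Finset.card_pos]; rw [s.2] at hcs; omega
        obtain ⟨b, hb⟩ : (y.val \ s.val).Nonempty := by
          rw [← Finset.card_pos]; rw [y.2] at hct; omega
        rw [Finset.mem_sdiff] at ha hb
        set y' : Finset α := insert a (y.val.erase b) with hy'def
        have hy'c : y'.card = k := by
          rw [hy'def, Finset.card_insert_of_notMem
            (fun h => ha.2 (Finset.mem_of_mem_erase h)),
            Finset.card_erase_of_mem hb.1, y.2]
          omega
        have hyy' : y.val ∩ y' = y.val.erase b := by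
          ext z
          simp only [hy'def, Finset.mem_inter, Finset.mem_insert, Finset.mem_erase]
          constructor
          · rintro ⟨hzy, rfl | ⟨hzb, _⟩⟩
            · exact absurd hzy ha.2
            · exact ⟨hzb, hzy⟩
          · rintro ⟨hzb, hzy⟩
            exact ⟨hzy, Or.inr ⟨hzb, hzy⟩⟩
        have hsy' : s.val ∩ y' = insert a (s.val ∩ y.val) := by
          ext z
          simp only [hy'def, Finset.mem_inter, Finset.mem_insert, Finset.mem_erase]
          constructor
          · rintro ⟨hzs, rfl | ⟨hzb, hzy⟩⟩
            · exact Or.inl rfl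
            · exact Or.inr ⟨hzs, hzy⟩
          · rintro (rfl | ⟨hzs, hzy⟩)
            · exact ⟨ha.1, Or.inl rfl⟩
            · exact ⟨hzs, Or.inr ⟨fun h => hb.2 (h ▸ hzs), hzy⟩⟩
        have hcard' : (s.val ∩ y').card + c = k := by
          rw [hsy', Finset.card_insert_of_notMem
            (fun h => ha.2 (Finset.mem_inter.mp h).2)]
          omega
        refine hE ⟨y', hy'c⟩ (ih ⟨y', hy'c⟩ hcard') y ?_
        show (y' ∩ y.val).card = k - 1
        rw [Finset.inter_comm, hyy', Finset.card_erase_of_mem hb.1, y.2]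
    ext y
    simp only [Set.mem_univ, iff_true]
    have hle : (s.val ∩ y.val).card ≤ k :=
      le_of_le_of_eq (Finset.card_le_card Finset.inter_subset_left) s.2
    exact hall (k - (s.val ∩ y.val).card) y (by omega)
end

section
/- Let n and k be integers with 0 < k, k < n − k, and 4 ≤ n. The natural action of the symmetric group S_n on the set X^[k] of k-element subsets of an n-element set X is primitive. -/
open Pointwise

section Aux

variable {α : Type*} [DecidableEq α]

lemma my_swap_smul_of_mem_mem {x y : α} {s : Finset α} (hx : x ∈ s) (hy : y ∈ s) :
    Equiv.swap x y • s = s := by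
  ext a
  rw [← Finset.inv_smul_mem_iff, Equiv.Perm.smul_def, Equiv.swap_inv, Equiv.swap_apply_def]
  split_ifs with h1 h2 <;> simp_all

lemma my_swap_smul_of_notMem {x y : α} {s : Finset α} (hx : x ∉ s) (hy : y ∉ s) :
    Equiv.swap x y • s = s := by
  ext a
  rw [← Finset.inv_smul_mem_iff, Equiv.Perm.smul_def, Equiv.swap_inv, Equiv.swap_apply_def]
  split_ifs with h1 h2 <;> simp_all

lemma my_swap_smul_of_mem_notMem {x y : α} {s : Finset α} (hx : x ∈ s) (hy : y ∉ s) :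
    Equiv.swap x y • s = insert y (s.erase x) := by
  ext a
  rw [← Finset.inv_smul_mem_iff, Equiv.Perm.smul_def, Equiv.swap_inv, Equiv.swap_apply_def]
  split_ifs with h1 h2 <;> simp_all [eq_comm] <;> rintro rfl <;> simp_all

/-- There is a permutation stabilizing `s` and carrying `t` to `u`, provided the
cardinalities and the intersection-with-`s` cardinalities match. -/
lemma exists_perm_fix_map (s : Finset α) :
    ∀ (d : ℕ) (t u : Finset α), (u \ t).card = d → t.card = u.card →
      (t ∩ s).card = (u ∩ s).card → ∃ g : Equiv.Perm α, g • s = s ∧ g • t = u := by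
  intro d
  induction d with
  | zero =>
    intro t u hd hc _
    have : u ⊆ t := by
      rw [← Finset.sdiff_eq_empty_iff_subset]
      exact Finset.card_eq_zero.mp hd
    have : t = u := (Finset.eq_of_subset_of_card_le this hc.le).symm
    exact ⟨1, one_smul _ _, by rw [this, one_smul]⟩
  | succ d ih =>
    intro t u hd hc hi
    have hne : t ≠ u := by
      rintro rfl; simp at hd
    by_cases h : t ∩ s = u ∩ s
    · -- pick x ∈ t \ u (then x ∉ s), y ∈ u \ t (then y ∉ s)
      have hcc : (t \ u).card = (u \ t).card := Finset.card_sdiff_comm hc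
      obtain ⟨x, hx⟩ : (t \ u).Nonempty := by
        rw [← Finset.card_pos, hcc, hd]; omega
      obtain ⟨y, hy⟩ : (u \ t).Nonempty := by
        rw [← Finset.card_pos, hd]; omega
      rw [Finset.mem_sdiff] at hx hy
      have hxs : x ∉ s := fun hxs => hx.2 (by
        have : x ∈ u ∩ s := h ▸ Finset.mem_inter.mpr ⟨hx.1, hxs⟩
        exact (Finset.mem_inter.mp this).1)
      have hys : y ∉ s := fun hys => hy.2 (by
        have : y ∈ t ∩ s := h.symm ▸ Finset.mem_inter.mpr ⟨hy.1, hys⟩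
        exact (Finset.mem_inter.mp this).1)
      have hxt : x ∈ t := hx.1
      have hyt : y ∉ t := hy.2
      set t' := insert y (t.erase x) with ht'
      have hswap : Equiv.swap x y • t = t' := my_swap_smul_of_mem_notMem hxt hyt
      have h1 : (u \ t').card = d := by
        have : u \ t' = (u \ t).erase y := by
          ext z
          simp only [ht', Finset.mem_sdiff, Finset.mem_insert, Finset.mem_erase]
          constructor
          · rintro ⟨hz, hz2⟩
            push_neg at hz2
            exact ⟨hz2.1, hz, hz2.2 (fun hzx => hx.2 (hzx ▸ hz))⟩
          · rintro ⟨hzy, hz, hzt⟩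
            exact ⟨hz, by push_neg; exact ⟨hzy, fun _ => hzt⟩⟩
        rw [this, Finset.card_erase_of_mem (Finset.mem_sdiff.mpr hy), hd]
        omega
      have h2 : t'.card = u.card := by
        rw [ht', Finset.card_insert_of_notMem (by simp [hyt]),
          Finset.card_erase_of_mem hxt, ← hc]
        have : 0 < t.card := Finset.card_pos.mpr ⟨x, hxt⟩
        omega
      have h3 : (t' ∩ s).card = (u ∩ s).card := by
        have : t' ∩ s = t ∩ s := by
          ext z
          simp only [ht', Finset.mem_inter, Finset.mem_insert, Finset.mem_erase]
          constructor
          · rintro ⟨hz1 | ⟨hz1, hz2⟩, hz3⟩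
            · exact absurd (hz1 ▸ hz3) hys
            · exact ⟨hz2, hz3⟩
          · rintro ⟨hz1, hz2⟩
            exact ⟨Or.inr ⟨fun hzx => hxs (hzx ▸ hz2), hz1⟩, hz2⟩
        rw [this, hi]
      obtain ⟨g, hgs, hgt⟩ := ih t' u h1 h2 h3
      refine ⟨g * Equiv.swap x y, ?_, ?_⟩
      · rw [mul_smul, my_swap_smul_of_notMem hxs hys, hgs]
      · rw [mul_smul, hswap, hgt]
    · -- t ∩ s ≠ u ∩ s; pick x ∈ (t∩s)\(u∩s), y ∈ (u∩s)\(t∩s)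
      have hsub : ¬ (t ∩ s ⊆ u ∩ s) := fun hs => h (Finset.eq_of_subset_of_card_le hs hi.ge)
      have hsub' : ¬ (u ∩ s ⊆ t ∩ s) := fun hs => h (Finset.eq_of_subset_of_card_le hs hi.le).symm
      obtain ⟨x, hx1, hx2⟩ := Finset.not_subset.mp hsub
      obtain ⟨y, hy1, hy2⟩ := Finset.not_subset.mp hsub'
      rw [Finset.mem_inter] at hx1 hy1
      have hxu : x ∉ u := fun hxu => hx2 (Finset.mem_inter.mpr ⟨hxu, hx1.2⟩)
      have hyt : y ∉ t := fun hyt => hy2 (Finset.mem_inter.mpr ⟨hyt, hy1.2⟩)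
      set t' := insert y (t.erase x) with ht'
      have hswap : Equiv.swap x y • t = t' := my_swap_smul_of_mem_notMem hx1.1 hyt
      have h1 : (u \ t').card = d := by
        have : u \ t' = (u \ t).erase y := by
          ext z
          simp only [ht', Finset.mem_sdiff, Finset.mem_insert, Finset.mem_erase]
          constructor
          · rintro ⟨hz, hz2⟩
            push_neg at hz2
            exact ⟨hz2.1, hz, hz2.2 (fun hzx => hxu (hzx ▸ hz))⟩
          · rintro ⟨hzy, hz, hzt⟩
            exact ⟨hz, by push_neg; exact ⟨hzy, fun _ => hzt⟩⟩
        rw [this, Finset.card_erase_of_mem (Finset.mem_sdiff.mpr ⟨hy1.1, hyt⟩), hd]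
        omega
      have h2 : t'.card = u.card := by
        rw [ht', Finset.card_insert_of_notMem (by simp [hyt]),
          Finset.card_erase_of_mem hx1.1, ← hc]
        have : 0 < t.card := Finset.card_pos.mpr ⟨x, hx1.1⟩
        omega
      have h3 : (t' ∩ s).card = (u ∩ s).card := by
        have he : t' ∩ s = insert y ((t ∩ s).erase x) := by
          ext z
          simp only [ht', Finset.mem_inter, Finset.mem_insert, Finset.mem_erase]
          constructor
          · rintro ⟨hz1 | ⟨hz1, hz2⟩, hz3⟩
            · exact Or.inl hz1
            · exact Or.inr ⟨hz1, hz2, hz3⟩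
          · rintro (rfl | ⟨hz1, hz2, hz3⟩)
            · exact ⟨Or.inl rfl, hy1.2⟩
            · exact ⟨Or.inr ⟨hz1, hz2⟩, hz3⟩
        rw [he, Finset.card_insert_of_notMem (fun hmem => hy2 (Finset.mem_erase.mp hmem).2),
          Finset.card_erase_of_mem (Finset.mem_inter.mpr hx1), ← hi]
        have : 0 < (t ∩ s).card := Finset.card_pos.mpr ⟨x, Finset.mem_inter.mpr hx1⟩
        omega
      obtain ⟨g, hgs, hgt⟩ := ih t' u h1 h2 h3
      refine ⟨g * Equiv.swap x y, ?_, ?_⟩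
      · rw [mul_smul, my_swap_smul_of_mem_mem hx1.2 hy1.2, hgs]
      · rw [mul_smul, hswap, hgt]

/-- If a block contains `s` and `t`, it contains every `u` having the same
intersection cardinality with `s` as `t` does. -/
lemma mem_block_of_card_inter {k : ℕ} {B : Set { s : Finset α // s.card = k }}
    (hB : MulAction.IsBlock (Equiv.Perm α) B)
    {s t : { s : Finset α // s.card = k }} (hs : s ∈ B) (ht : t ∈ B)
    (u : { s : Finset α // s.card = k })
    (hi : (t.val ∩ s.val).card = (u.val ∩ s.val).card) : u ∈ B := by
  obtain ⟨g, hgs, hgt⟩ :=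
    exists_perm_fix_map s.val ((u.val \ t.val).card) t.val u.val rfl
      (t.2.trans u.2.symm) hi
  have hfix : g • s = s := Subtype.ext hgs
  have hBB : g • B = B := by
    rcases hB.smul_eq_or_disjoint g with h | h
    · exact h
    · exact absurd h (Set.not_disjoint_iff.mpr ⟨s, ⟨s, hs, hfix⟩, hs⟩)
  have hmem : g • t ∈ B := hBB ▸ Set.smul_mem_smul_set ht
  have : g • t = u := Subtype.ext hgt
  exact this ▸ hmem

/-- Neighbor-closure: if a block contains two sets meeting in `k-1` points,
it contains everything (proved by induction on the distance). -/
lemma block_univ_aux {k : ℕ} (hk : 0 < k) {B : Set { s : Finset α // s.card = k }}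
    (hB : MulAction.IsBlock (Equiv.Perm α) B) :
    ∀ (d : ℕ) (a b : { s : Finset α // s.card = k }), a ∈ B → b ∈ B →
      (a.val ∩ b.val).card = k - 1 →
      ∀ v : { s : Finset α // s.card = k }, (a.val \ v.val).card = d →
        v ∈ B ∧ ∃ w ∈ B, (v.val ∩ w.val).card = k - 1 := by
  intro d
  induction d with
  | zero =>
    intro a b ha hb hab v hv
    have hsub : a.val ⊆ v.val := by
      rw [← Finset.sdiff_eq_empty_iff_subset]
      exact Finset.card_eq_zero.mp hv
    have : v = a := Subtype.ext (Finset.eq_of_subset_of_card_le hsub (v.2.trans a.2.symm).le).symm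
    subst this
    exact ⟨ha, b, hb, hab⟩
  | succ d ih =>
    intro a b ha hb hab v hv
    have hvc : (v.val \ a.val).card = d + 1 := by
      rw [Finset.card_sdiff_comm (v.2.trans a.2.symm), hv]
    obtain ⟨x, hx⟩ : (v.val \ a.val).Nonempty := by
      rw [← Finset.card_pos, hvc]; omega
    obtain ⟨y, hy⟩ : (a.val \ v.val).Nonempty := by
      rw [← Finset.card_pos, hv]; omega
    rw [Finset.mem_sdiff] at hx hy
    have hycard : (insert y (v.val.erase x)).card = k := by
      rw [Finset.card_insert_of_notMem (fun hmem => hy.2 (Finset.mem_erase.mp hmem).2),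
        Finset.card_erase_of_mem hx.1, v.2]
      omega
    set v' : { s : Finset α // s.card = k } := ⟨insert y (v.val.erase x), hycard⟩ with hv'def
    have hav' : (a.val \ v'.val).card = d := by
      have : a.val \ v'.val = (a.val \ v.val).erase y := by
        ext z
        simp only [hv'def, Finset.mem_sdiff, Finset.mem_insert, Finset.mem_erase]
        constructor
        · rintro ⟨hz, hz2⟩
          push_neg at hz2
          exact ⟨hz2.1, hz, hz2.2 (fun hzx => hx.2 (hzx ▸ hz))⟩
        · rintro ⟨hzy, hz, hzt⟩
          exact ⟨hz, by push_neg; exact ⟨hzy, fun _ => hzt⟩⟩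
      rw [this, Finset.card_erase_of_mem (Finset.mem_sdiff.mpr hy), hv]
      omega
    obtain ⟨hv'B, w', hw'B, hw'⟩ := ih a b ha hb hab v' hav'
    have hvv' : (v.val ∩ v'.val).card = k - 1 := by
      have : v.val ∩ v'.val = v.val.erase x := by
        ext z
        simp only [hv'def, Finset.mem_inter, Finset.mem_insert, Finset.mem_erase]
        constructor
        · rintro ⟨hz, rfl | ⟨hz2, hz3⟩⟩
          · exact absurd hz hy.2
          · exact ⟨hz2, hz⟩
        · rintro ⟨hz1, hz2⟩
          exact ⟨hz2, Or.inr ⟨hz1, hz2⟩⟩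
      rw [this, Finset.card_erase_of_mem hx.1, v.2]
    have hvB : v ∈ B := by
      apply mem_block_of_card_inter hB hv'B hw'B v
      rw [Finset.inter_comm w'.val v'.val, hw']; exact hvv'.symm
    exact ⟨hvB, v', hv'B, hvv'⟩

end Aux

/-- If `0 < k`, `k < n - k` and `4 ≤ n`, the action of the symmetric group of an
`n`-element set `X` on the set of `k`-element subsets of `X` is primitive. -/
theorem isPreprimitive_perm_on_subsets {α : Type*} [DecidableEq α] [Fintype α] (k : ℕ)
    (hk : 0 < k) (hkk : k < Fintype.card α - k) (h4 : 4 ≤ Fintype.card α) :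
    IsPreprimitive (Equiv.Perm α) { s : Finset α // s.card = k } := by
  have hn : 2 * k + 1 ≤ Fintype.card α := by omega
  constructor
  · constructor
    intro x y
    obtain ⟨g, -, hg⟩ :=
      exists_perm_fix_map (∅ : Finset α) ((y.val \ x.val).card) x.val y.val rfl
        (x.2.trans y.2.symm) (by simp)
    exact ⟨g, Subtype.ext hg⟩
  · intro B hB
    rcases B.subsingleton_or_nontrivial with h | h
    · exact Or.inl h
    · right
      obtain ⟨s, hsB, t, htB, hst⟩ := h
      have hvalne : t.val ≠ s.val := fun h => hst.symm (Subtype.ext h)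
      -- pick t1 ∈ t \ s
      obtain ⟨t1, ht1⟩ : (t.val \ s.val).Nonempty := by
        rw [Finset.sdiff_nonempty]
        intro hsub
        exact hvalne (Finset.eq_of_subset_of_card_le hsub (s.2.trans t.2.symm).le)
      rw [Finset.mem_sdiff] at ht1
      -- pick w outside s ∪ t
      obtain ⟨w, hw⟩ : ((s.val ∪ t.val)ᶜ : Finset α).Nonempty := by
        rw [← Finset.card_pos, Finset.card_compl]
        have := Finset.card_union_le s.val t.val
        rw [s.2, t.2] at this
        omega
      rw [Finset.mem_compl, Finset.mem_union] at hw
      push_neg at hw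
      have hucard : (insert w (t.val.erase t1)).card = k := by
        rw [Finset.card_insert_of_notMem (fun hmem => hw.2 (Finset.mem_erase.mp hmem).2),
          Finset.card_erase_of_mem ht1.1, t.2]
        omega
      set u : { s : Finset α // s.card = k } := ⟨insert w (t.val.erase t1), hucard⟩ with hudef
      have hus : u.val ∩ s.val = t.val ∩ s.val := by
        ext z
        simp only [hudef, Finset.mem_inter, Finset.mem_insert, Finset.mem_erase]
        constructor
        · rintro ⟨rfl | ⟨hz1, hz2⟩, hz3⟩
          · exact absurd hz3 hw.1
          · exact ⟨hz2, hz3⟩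
        · rintro ⟨hz1, hz2⟩
          exact ⟨Or.inr ⟨fun hzt => ht1.2 (hzt ▸ hz2), hz1⟩, hz2⟩
      have huB : u ∈ B := mem_block_of_card_inter hB hsB htB u (by rw [hus])
      have htu : (t.val ∩ u.val).card = k - 1 := by
        have : t.val ∩ u.val = t.val.erase t1 := by
          ext z
          simp only [hudef, Finset.mem_inter, Finset.mem_insert, Finset.mem_erase]
          constructor
          · rintro ⟨hz, rfl | ⟨hz2, hz3⟩⟩
            · exact absurd hz hw.2
            · exact ⟨hz2, hz⟩
          · rintro ⟨hz1, hz2⟩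
            exact ⟨hz2, Or.inr ⟨hz1, hz2⟩⟩
        rw [this, Finset.card_erase_of_mem ht1.1, t.2]
      rw [Set.eq_univ_iff_forall]
      intro v
      exact (block_univ_aux hk hB ((t.val \ v.val).card) t u htB huB htu v rfl).1
end

section
/- Let n and k be integers with 0 < k and k < n − k. The stabilizer in the alternating group A_n of the k-element subset {1,…,k} of {1,…,n}, that is, the intersection of A_n with the subgroup S_k × S_{n−k} of permutations preserving the partition {{1,…,k},{k+1,…,n}}, is a maximal subgroup of A_n. -/
open Pointwise

namespace StabCoatomAux

open Equiv Equiv.Perm Finset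

variable {α : Type*} [DecidableEq α]

/-- The 3-cycle `x ↦ y ↦ z ↦ x`. -/
def c3 (x y z : α) : Perm α := swap x y * swap y z

lemma c3_apply₁ {x y z : α} (hxy : x ≠ y) (hxz : x ≠ z) : c3 x y z x = y := by
  simp [c3, swap_apply_of_ne_of_ne hxy hxz]

lemma c3_apply₂ {x y z : α} (hxz : x ≠ z) (hyz : y ≠ z) : c3 x y z y = z := by
  simp [c3, swap_apply_of_ne_of_ne (Ne.symm hxz) (Ne.symm hyz)]

lemma c3_apply₃ {x y z : α} (hyz : y ≠ z) : c3 x y z z = x := by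
  simp [c3, swap_apply_of_ne_of_ne, hyz.symm]

lemma c3_apply_of_ne {x y z t : α} (h1 : t ≠ x) (h2 : t ≠ y) (h3 : t ≠ z) :
    c3 x y z t = t := by
  simp [c3, swap_apply_of_ne_of_ne, h1, h2, h3]

lemma c3_inv {x y z : α} (hxy : x ≠ y) (hxz : x ≠ z) (hyz : y ≠ z) :
    (c3 x y z)⁻¹ = c3 x z y := by
  ext t
  simp only [c3, mul_inv_rev, swap_inv, mul_apply, swap_apply_def]
  split_ifs <;> grind

lemma c3_rotate {x y z : α} (hxy : x ≠ y) (hxz : x ≠ z) (hyz : y ≠ z) :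
    c3 x y z = c3 y z x := by
  ext t
  simp only [c3, mul_apply, swap_apply_def]
  split_ifs <;> grind

lemma c3_conj (π : Perm α) (x y z : α) : π * c3 x y z * π⁻¹ = c3 (π x) (π y) (π z) := by
  simp only [c3, swap_apply_apply, mul_assoc, inv_mul_cancel_left, mul_inv_cancel_left]

set_option maxHeartbeats 2000000 in
lemma c3_idC {x y z w : α} (hxy : x ≠ y) (hxz : x ≠ z) (hxw : x ≠ w) (hyz : y ≠ z)
    (hyw : y ≠ w) (hzw : z ≠ w) : c3 x y w = c3 x y z * c3 z y w := by
  ext t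
  simp only [c3, mul_apply, swap_apply_def]
  split_ifs <;> grind

set_option maxHeartbeats 2000000 in
lemma c3_idD {x y u v : α} (hxy : x ≠ y) (hxu : x ≠ u) (hxv : x ≠ v) (hyu : y ≠ u)
    (hyv : y ≠ v) (huv : u ≠ v) : c3 x y v = c3 u y v * c3 x u v := by
  ext t
  simp only [c3, mul_apply, swap_apply_def]
  split_ifs <;> grind

lemma perm_smul_eq_of_maps {g : Perm α} {s : Finset α} (h : ∀ x ∈ s, g x ∈ s) :
    g • s = s := by
  apply Finset.eq_of_subset_of_card_le
  · intro t ht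
    rw [Finset.mem_smul_finset] at ht
    obtain ⟨y, hy, rfl⟩ := ht
    exact h y hy
  · rw [Finset.card_smul_finset]

lemma swap_maps {a b : α} {s : Finset α} (ha : a ∈ s) (hb : b ∈ s) :
    ∀ x ∈ s, swap a b x ∈ s := by
  intro x hx
  rcases eq_or_ne x a with rfl | h1
  · rwa [swap_apply_left]
  rcases eq_or_ne x b with rfl | h2
  · rwa [swap_apply_right]
  · rwa [swap_apply_of_ne_of_ne h1 h2]

lemma swap_maps_compl {a b : α} {s : Finset α} (ha : a ∉ s) (hb : b ∉ s) :
    ∀ x ∈ s, swap a b x ∈ s := by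
  intro x hx
  have h1 : x ≠ a := fun h => ha (h ▸ hx)
  have h2 : x ≠ b := fun h => hb (h ▸ hx)
  rw [swap_apply_of_ne_of_ne h1 h2]
  exact hx

lemma c3_smul_of_mem {x y z : α} {s : Finset α} (hx : x ∈ s) (hy : y ∈ s) (hz : z ∈ s) :
    c3 x y z • s = s := by
  apply perm_smul_eq_of_maps
  intro t ht
  exact swap_maps hx hy _ (swap_maps hy hz t ht)

lemma c3_smul_of_not_mem {x y z : α} {s : Finset α} (hx : x ∉ s) (hy : y ∉ s) (hz : z ∉ s) :
    c3 x y z • s = s := by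
  apply perm_smul_eq_of_maps
  intro t ht
  exact swap_maps_compl hx hy _ (swap_maps_compl hy hz t ht)

variable [Fintype α]

lemma c3_mem_alternating {x y z : α} (hxy : x ≠ y) (hyz : y ≠ z) :
    c3 x y z ∈ alternatingGroup α := by
  rw [Equiv.Perm.mem_alternatingGroup, c3, map_mul, sign_swap hxy, sign_swap hyz]
  simp

lemma swap_mul_swap_mem_alternating {a b u v : α} (hab : a ≠ b) (huv : u ≠ v) :
    swap a b * swap u v ∈ alternatingGroup α := by
  rw [Equiv.Perm.mem_alternatingGroup, map_mul, sign_swap hab, sign_swap huv]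
  simp

lemma isThreeCycle_decomp {σ : Perm α} (h : σ.IsThreeCycle) :
    ∃ x y z : α, x ≠ y ∧ x ≠ z ∧ y ≠ z ∧ σ = c3 x y z := by
  obtain ⟨x, hx, -⟩ := h.isCycle
  have h3 : σ ^ 3 = 1 := by rw [← h.orderOf]; exact pow_orderOf_eq_one σ
  have h3x : σ (σ (σ x)) = x := by
    have := congrArg (fun p : Perm α => p x) h3
    simpa [pow_succ, mul_apply] using this
  refine ⟨x, σ x, σ (σ x), ?_, ?_, ?_, ?_⟩
  · exact fun h' => hx h'.symm
  · intro h'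
    have : σ (σ (σ x)) = σ x := by rw [← h']
    rw [h3x] at this
    exact hx this.symm
  · intro h'
    have := σ.injective h'
    exact hx this.symm
  · have hxy : x ≠ σ x := fun h' => hx h'.symm
    have hyz : σ x ≠ σ (σ x) := fun h' => hx (σ.injective h').symm
    have hxz : x ≠ σ (σ x) := by
      intro h'
      have : σ (σ (σ x)) = σ x := by rw [← h']
      rw [h3x] at this
      exact hx this.symm
    have hsupp : σ.support = {x, σ x, σ (σ x)} := by
      apply (Finset.eq_of_subset_of_card_le _ _).symm
      · intro t ht
        simp only [Finset.mem_insert, Finset.mem_singleton] at ht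
        rcases ht with rfl | rfl | rfl <;> rw [Equiv.Perm.mem_support]
        · exact hx
        · exact fun h' => hyz h'.symm
        · rw [h3x]; exact fun h' => hxz h'
      · rw [h.card_support]
        rw [Finset.card_insert_of_notMem, Finset.card_insert_of_notMem, Finset.card_singleton]
        · simpa using hyz
        · simp only [Finset.mem_insert, Finset.mem_singleton]
          push_neg
          exact ⟨hxy, hxz⟩
    ext t
    by_cases t1 : t = x
    · subst t1; rw [c3_apply₁ hxy hxz]
    by_cases t2 : t = σ x
    · subst t2; rw [c3_apply₂ hxz hyz]
    by_cases t3 : t = σ (σ x)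
    · subst t3; rw [c3_apply₃ hyz, h3x]
    · rw [c3_apply_of_ne t1 t2 t3]
      have : t ∉ σ.support := by
        rw [hsupp]
        simp [t1, t2, t3]
      rwa [Equiv.Perm.notMem_support] at this

end StabCoatomAux


open Pointwise Equiv Equiv.Perm Finset

namespace StabCoatomAux

variable {α : Type*} [DecidableEq α] [Fintype α]

lemma exists_not_mem_ne {s : Finset α} (h2 : 2 ≤ sᶜ.card) (u : α) :
    ∃ v, v ∉ s ∧ v ≠ u := by
  have h1 : 1 < sᶜ.card := h2
  obtain ⟨v, hv, hvu⟩ := Finset.exists_mem_ne h1 u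
  exact ⟨v, Finset.mem_compl.mp hv, hvu⟩

lemma main (s : Finset α) (hk : 0 < s.card) (hkk : s.card < sᶜ.card) (h3 : 3 ≤ sᶜ.card)
    (M : Subgroup (Perm α))
    (hH : ∀ π : Perm α, π ∈ alternatingGroup α → π • s = s → π ∈ M)
    {g : Perm α} (hgM : g ∈ M) (hgs : g • s ≠ s) :
    alternatingGroup α ≤ M := by
  classical
  -- step 1 : find x ∉ s with g x ∈ s
  obtain ⟨x, hxs, hgx⟩ : ∃ x, x ∉ s ∧ g x ∈ s := by
    by_contra hcon
    push_neg at hcon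
    apply hgs
    apply perm_smul_eq_of_maps
    intro t ht
    by_contra hgt
    have hsc : g • (sᶜ : Finset α) = sᶜ := by
      apply perm_smul_eq_of_maps
      intro u hu
      exact Finset.mem_compl.mpr (hcon u (Finset.mem_compl.mp hu))
    have : g t ∈ g • (sᶜ : Finset α) := by
      rw [hsc]; exact Finset.mem_compl.mpr hgt
    rw [Finset.mem_smul_finset] at this
    obtain ⟨u, hu, hut⟩ := this
    have : u = t := g.injective hut
    subst this
    exact Finset.mem_compl.mp hu ht
  -- step 2 : find y ∉ s with g y ∉ s
  obtain ⟨y, hys, hgy⟩ : ∃ y, y ∉ s ∧ g y ∉ s := by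
    by_contra hcon
    push_neg at hcon
    have : sᶜ.card ≤ s.card := by
      apply Finset.card_le_card_of_injOn g
      · intro a ha
        exact hcon a (Finset.mem_compl.mp ha)
      · intro a _ b _ h
        exact g.injective h
    omega
  have hxy : x ≠ y := fun h => hgy (h ▸ hgx)
  -- step 3 : z ∉ s, z ≠ x, z ≠ y
  obtain ⟨z, hzs, hzx, hzy⟩ : ∃ z, z ∉ s ∧ z ≠ x ∧ z ≠ y := by
    have hcard : 0 < (sᶜ \ {x, y}).card := by
      have h1 : sᶜ.card - ({x, y} : Finset α).card ≤ (sᶜ \ {x, y}).card :=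
        Finset.le_card_sdiff _ _
      have h2 : ({x, y} : Finset α).card ≤ 2 := Finset.card_insert_le _ _ |>.trans (by simp)
      omega
    obtain ⟨z, hz⟩ := Finset.card_pos.mp hcard
    rw [Finset.mem_sdiff, Finset.mem_compl, Finset.mem_insert, Finset.mem_singleton] at hz
    push_neg at hz
    exact ⟨z, hz.1, hz.2.1, hz.2.2⟩
  have hyz : y ≠ z := hzy.symm
  have hcyc : c3 x y z ∈ M :=
    hH _ (c3_mem_alternating hxy hyz) (c3_smul_of_not_mem hxs hys hzs)
  have hσ : c3 (g x) (g y) (g z) ∈ M := by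
    rw [← c3_conj]
    exact M.mul_mem (M.mul_mem hgM hcyc) (M.inv_mem hgM)
  have gxy : g x ≠ g y := fun h => hxy (g.injective h)
  have gxz : g x ≠ g z := fun h => hzx (g.injective h).symm
  have gyz : g y ≠ g z := fun h => hzy (g.injective h).symm
  -- seed : a (1,2)-cycle in M
  obtain ⟨a, u₀, v₀, has, hu₀, hv₀, hau₀, hav₀, huv₀, hseed⟩ :
      ∃ a u v, a ∈ s ∧ u ∉ s ∧ v ∉ s ∧ a ≠ u ∧ a ≠ v ∧ u ≠ v ∧ c3 a u v ∈ M := by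
    by_cases hgz : g z ∈ s
    · -- conversion from a (2,1)-type cycle
      have hab : g x ≠ g z := gxz
      have hau : g x ≠ g y := gxy
      have hub : g y ≠ g z := gyz
      obtain ⟨p, hps, hpu⟩ := exists_not_mem_ne (show 2 ≤ sᶜ.card by omega) (g y)
      have hpa : p ≠ g x := fun h => hps (h ▸ hgx)
      have hpb : p ≠ g z := fun h => hps (h ▸ hgz)
      set a := g x
      set u := g y
      set b := g z
      have hτA : swap u p * swap a b ∈ alternatingGroup α :=
        swap_mul_swap_mem_alternating (Ne.symm hpu) hab
      have hτs : (swap u p * swap a b) • s = s := by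
        apply perm_smul_eq_of_maps
        intro t ht
        rw [mul_apply]
        exact swap_maps_compl hgy hps _ (swap_maps hgx hgz t ht)
      have hτM : swap u p * swap a b ∈ M := hH _ hτA hτs
      have h1 : c3 a b u ∈ M := by
        have := M.inv_mem hσ
        rwa [c3_inv hau hab hub] at this
      have h2 : c3 b a p ∈ M := by
        have hm := M.mul_mem (M.mul_mem hτM h1) (M.inv_mem hτM)
        rw [c3_conj] at hm
        have e1 : (swap u p * swap a b) a = b := by
          rw [mul_apply, swap_apply_left, swap_apply_of_ne_of_ne hub.symm hpb.symm]
        have e2 : (swap u p * swap a b) b = a := by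
          rw [mul_apply, swap_apply_right, swap_apply_of_ne_of_ne hau hpa.symm]
        have e3 : (swap u p * swap a b) u = p := by
          rw [mul_apply, swap_apply_of_ne_of_ne hau.symm hub, swap_apply_left]
        rwa [e1, e2, e3] at hm
      have h3' : c3 p a b ∈ M := by
        have hm := M.inv_mem h2
        rw [c3_inv hab.symm hpb.symm hpa.symm] at hm
        rwa [c3_rotate hpb.symm hab.symm hpa] at hm
      have h4 : c3 p u b ∈ M := by
        rw [c3_idD hpu hpa hpb hau.symm hub hab]
        exact M.mul_mem hσ h3'
      refine ⟨b, p, u, hgz, hps, hgy, hpb.symm, hub.symm, hpu, ?_⟩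
      rwa [c3_rotate hpu hpb hub, c3_rotate hub hpu.symm hpb.symm] at h4
    · exact ⟨g x, g y, g z, hgx, hgy, hgz, gxy, gxz, gyz, hσ⟩
  -- replacement lemmas
  have replLast : ∀ u v, u ∉ s → v ∉ s → u ≠ v → c3 a u v ∈ M →
      ∀ v', v' ∉ s → v' ≠ u → c3 a u v' ∈ M := by
    intro u v hu hv huv hm v' hv' hv'u
    by_cases hvv : v' = v
    · subst hvv; exact hm
    · have hau : a ≠ u := fun h => hu (h ▸ has)
      have hav : a ≠ v := fun h => hv (h ▸ has)
      have hav' : a ≠ v' := fun h => hv' (h ▸ has)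
      rw [c3_idC hau hav hav' huv (Ne.symm hv'u) (fun h => hvv h.symm)]
      exact M.mul_mem hm
        (hH _ (c3_mem_alternating huv.symm (Ne.symm hv'u)) (c3_smul_of_not_mem hv hu hv'))
  have replMid : ∀ u v, u ∉ s → v ∉ s → u ≠ v → c3 a u v ∈ M →
      ∀ u', u' ∉ s → u' ≠ v → c3 a u' v ∈ M := by
    intro u v hu hv huv hm u' hu' hu'v
    by_cases huu : u' = u
    · subst huu; exact hm
    · have hau : a ≠ u := fun h => hu (h ▸ has)
      have hav : a ≠ v := fun h => hv (h ▸ has)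
      have hau' : a ≠ u' := fun h => hu' (h ▸ has)
      have h1 : c3 a v u ∈ M := by
        have := M.inv_mem hm
        rwa [c3_inv hau hav huv] at this
      have h2 : c3 a v u' ∈ M := replLast v u hv hu huv.symm h1 u' hu' hu'v
      have := M.inv_mem h2
      rwa [c3_inv hav hau' (fun h => hu'v h.symm)] at this
  -- stage A : all (1,2)-cycles with first point a
  have stageA : ∀ p q, p ∉ s → q ∉ s → p ≠ q → c3 a p q ∈ M := by
    intro p q hp hq hpq
    by_cases hqu : q = u₀
    · have hpu₀ : p ≠ u₀ := hqu ▸ hpq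
      have h1 : c3 a u₀ p ∈ M := replLast u₀ v₀ hu₀ hv₀ huv₀ hseed p hp hpu₀
      have hap : a ≠ p := fun h => hp (h ▸ has)
      have h2 := M.inv_mem h1
      rw [c3_inv hau₀ hap hpu₀.symm] at h2
      rw [hqu]
      exact h2
    · have h1 : c3 a u₀ q ∈ M := replLast u₀ v₀ hu₀ hv₀ huv₀ hseed q hq hqu
      exact replMid u₀ q hu₀ hq (fun h => hqu h.symm) h1 p hp hpq
  -- stage B : all (1,2)-cycles
  have stageB : ∀ a' p q, a' ∈ s → p ∉ s → q ∉ s → p ≠ q → c3 a' p q ∈ M := by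
    intro a' p q ha' hp hq hpq
    by_cases haa : a' = a
    · subst haa; exact stageA p q hp hq hpq
    · obtain ⟨w₁, hw₁, -⟩ := exists_not_mem_ne (show 2 ≤ sᶜ.card by omega) a
      obtain ⟨w₂, hw₂, hw₂w₁⟩ := exists_not_mem_ne (show 2 ≤ sᶜ.card by omega) w₁
      set τ := swap a a' * swap w₁ w₂ with hτ
      have hτA : τ ∈ alternatingGroup α :=
        swap_mul_swap_mem_alternating (fun h => haa h.symm) (Ne.symm hw₂w₁)
      have hτmaps : ∀ t ∈ s, τ t ∈ s := by
        intro t ht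
        rw [hτ, mul_apply]
        exact swap_maps has ha' _ (swap_maps_compl hw₁ hw₂ t ht)
      have hτM : τ ∈ M := hH _ hτA (perm_smul_eq_of_maps hτmaps)
      have hp' : τ⁻¹ p ∉ s := by
        intro hmem
        have := hτmaps _ hmem
        rw [Equiv.Perm.coe_inv, Equiv.apply_symm_apply] at this
        exact hp this
      have hq' : τ⁻¹ q ∉ s := by
        intro hmem
        have := hτmaps _ hmem
        rw [Equiv.Perm.coe_inv, Equiv.apply_symm_apply] at this
        exact hq this
      have hp'q' : τ⁻¹ p ≠ τ⁻¹ q := by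
        intro h
        have := congrArg τ h
        rw [Equiv.Perm.coe_inv, Equiv.apply_symm_apply, Equiv.apply_symm_apply] at this
        exact hpq this
      have hm := M.mul_mem (M.mul_mem hτM (stageA _ _ hp' hq' hp'q')) (M.inv_mem hτM)
      rw [c3_conj] at hm
      have e1 : τ a = a' := by
        have haw₁ : a ≠ w₁ := fun h => hw₁ (h ▸ has)
        have haw₂ : a ≠ w₂ := fun h => hw₂ (h ▸ has)
        rw [hτ, mul_apply, swap_apply_of_ne_of_ne haw₁ haw₂, swap_apply_left]
      rwa [e1, Equiv.Perm.coe_inv, Equiv.apply_symm_apply, Equiv.apply_symm_apply] at hm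
  -- stage C : all (2,1)-cycles
  have stageC : ∀ x' y' u', x' ∈ s → y' ∈ s → u' ∉ s → x' ≠ y' → c3 x' y' u' ∈ M := by
    intro x' y' u' hx' hy' hu' hxy'
    obtain ⟨u₂, hu₂, hu₂u⟩ := exists_not_mem_ne (show 2 ≤ sᶜ.card by omega) u'
    have hx'u₂ : x' ≠ u₂ := fun h => hu₂ (h ▸ hx')
    have hx'u' : x' ≠ u' := fun h => hu' (h ▸ hx')
    have hy'u₂ : y' ≠ u₂ := fun h => hu₂ (h ▸ hy')
    have hy'u' : y' ≠ u' := fun h => hu' (h ▸ hy')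
    rw [c3_idD hxy' hx'u₂ hx'u' hy'u₂ hy'u' hu₂u]
    refine M.mul_mem ?_ (stageB x' u₂ u' hx' hu₂ hu' hu₂u)
    rw [c3_rotate hy'u₂.symm hu₂u hy'u']
    exact stageB y' u' u₂ hy' hu' hu₂ hu₂u.symm
  -- conclusion
  rw [← Equiv.Perm.closure_three_cycles_eq_alternating, Subgroup.closure_le]
  intro σ hσ'
  obtain ⟨x1, y1, z1, h12, h13, h23, rfl⟩ := isThreeCycle_decomp hσ'
  show c3 x1 y1 z1 ∈ M
  by_cases m1 : x1 ∈ s <;> by_cases m2 : y1 ∈ s <;> by_cases m3 : z1 ∈ s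
  · exact hH _ (c3_mem_alternating h12 h23) (c3_smul_of_mem m1 m2 m3)
  · exact stageC x1 y1 z1 m1 m2 m3 h12
  · rw [c3_rotate h12 h13 h23, c3_rotate h23 h12.symm h13.symm]
    exact stageC z1 x1 y1 m3 m1 m2 h13.symm
  · exact stageB x1 y1 z1 m1 m2 m3 h23
  · rw [c3_rotate h12 h13 h23]
    exact stageC y1 z1 x1 m2 m3 m1 h23
  · rw [c3_rotate h12 h13 h23]
    exact stageB y1 z1 x1 m2 m3 m1 h13.symm
  · rw [c3_rotate h12 h13 h23, c3_rotate h23 h12.symm h13.symm]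
    exact stageB z1 x1 y1 m3 m1 m2 h12
  · exact hH _ (c3_mem_alternating h12 h23) (c3_smul_of_not_mem m1 m2 m3)

end StabCoatomAux

/-- For `0 < k` and `k < n - k`, the stabilizer in the alternating group of a
`k`-element subset of an `n`-element set (the intersection of the alternating group with
the subgroup of permutations preserving the subset and its complement) is a maximal
subgroup of the alternating group. -/

theorem stabilizer_subset_isCoatom {α : Type*} [DecidableEq α] [Fintype α] (k : ℕ)
    (hk : 0 < k) (hkk : k < Fintype.card α - k) (s : Finset α) (hs : s.card = k) :
    IsCoatom (MulAction.stabilizer (alternatingGroup α) s) := by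
  classical
  have hsc : sᶜ.card = Fintype.card α - k := by rw [Finset.card_compl, hs]
  have hk' : 0 < s.card := hs ▸ hk
  have hkk' : s.card < sᶜ.card := by rw [hs, hsc]; exact hkk
  constructor
  · -- the stabilizer is not everything
    intro htop
    obtain ⟨a, has⟩ := Finset.card_pos.mp hk'
    obtain ⟨u, hu, -⟩ := StabCoatomAux.exists_not_mem_ne (show 2 ≤ sᶜ.card by omega) a
    obtain ⟨v, hv, hvu⟩ := StabCoatomAux.exists_not_mem_ne (show 2 ≤ sᶜ.card by omega) u
    have hau : a ≠ u := fun h => hu (h ▸ has)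
    have hc : StabCoatomAux.c3 a u v ∈ alternatingGroup α :=
      StabCoatomAux.c3_mem_alternating hau hvu.symm
    have hmem : (⟨_, hc⟩ : alternatingGroup α) ∈ MulAction.stabilizer (alternatingGroup α) s := by
      rw [htop]; trivial
    rw [MulAction.mem_stabilizer_iff] at hmem
    have hsmul : StabCoatomAux.c3 a u v • s = s := hmem
    have h2 : StabCoatomAux.c3 a u v • a ∈ StabCoatomAux.c3 a u v • s :=
      Finset.smul_mem_smul_finset has
    rw [hsmul] at h2
    have h3 : StabCoatomAux.c3 a u v • a = u :=
      StabCoatomAux.c3_apply₁ hau (fun h => hv (h ▸ has))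
    rw [h3] at h2
    exact hu h2
  · intro K hK
    by_cases h3 : 3 ≤ sᶜ.card
    · obtain ⟨g, hgK, hgH⟩ := SetLike.exists_of_lt hK
      set M := K.map (alternatingGroup α).subtype with hM
      have hH : ∀ π : Equiv.Perm α, π ∈ alternatingGroup α → π • s = s → π ∈ M := by
        intro π hπA hπs
        exact ⟨⟨π, hπA⟩, hK.le (MulAction.mem_stabilizer_iff.mpr hπs), rfl⟩
      have hgM : (g : Equiv.Perm α) ∈ M := ⟨g, hgK, rfl⟩
      have hgs : (g : Equiv.Perm α) • s ≠ s := fun h => hgH (MulAction.mem_stabilizer_iff.mpr h)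
      have hle := StabCoatomAux.main s hk' hkk' h3 M hH hgM hgs
      rw [eq_top_iff]
      intro τ _
      obtain ⟨m, hm, hmeq⟩ := hle τ.2
      have : m = τ := Subtype.ext hmeq
      rwa [this] at hm
    · -- tiny case : |α| = 3, k = 1
      have hsc2 : sᶜ.card = 2 := by omega
      have hcα : Fintype.card α = 3 := by
        have := Finset.card_add_card_compl s
        omega
      have : Nontrivial α := Fintype.one_lt_card_iff_nontrivial.mp (by omega)
      have hcard : Fintype.card (alternatingGroup α) = 3 := by
        have h6 := two_mul_card_alternatingGroup (α := α)
        rw [Fintype.card_perm, hcα] at h6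
        rw [show Nat.factorial 3 = 6 from rfl] at h6
        omega
      have hcard' : Nat.card (alternatingGroup α) = 3 := by
        rw [Nat.card_eq_fintype_card]; exact hcard
      have hKne : K ≠ ⊥ := fun h => (not_lt_bot (h ▸ hK))
      have hdvd : Nat.card K ∣ Nat.card (alternatingGroup α) := Subgroup.card_subgroup_dvd_card K
      rw [hcard'] at hdvd
      have hne1 : Nat.card K ≠ 1 := fun h => hKne (Subgroup.card_eq_one.mp h)
      have hK3 : Nat.card K = 3 := by
        rcases (Nat.prime_three).eq_one_or_self_of_dvd _ hdvd with h | h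
        exacts [absurd h hne1, h]
      exact Subgroup.eq_top_of_card_eq K (by rw [hK3, hcard'])
end
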